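/- arXiv:2411.11633 — 3 statements merged into one kernel-verified Lean document; each statement's English description precedes it below -/
import Mathlib

section
/- Let B and L be n × n integer matrices with L skew-symmetric (Lᵀ = −L), and suppose BᵀL = D where D is a diagonal matrix. Then DB = −BᵀD; in particular, dᵢ·bᵢⱼ = −dⱼ·bⱼᵢ for all i, j, where dᵢ denotes the i-th diagonal entry of D. If moreover every dᵢ is nonzero, then bₖₖ = 0 for every k (so B is skew-symmetrizable by D). -/
open Matrix

theorem stmt5 {n : ℕ} (B L D : Matrix (Fin n) (Fin n) ℤ)
    (hL : Lᵀ = -L) (hD : D.IsDiag) (hBL : Bᵀ * L = D) :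
    D * B = -(Bᵀ * D) ∧
    (∀ i j, D i i * B i j = -(D j j * B j i)) ∧
    ((∀ i, D i i ≠ 0) → ∀ k, B k k = 0) := by
  have hDT : Dᵀ = D := by
    ext i j
    by_cases h : i = j
    · subst h; rfl
    · rw [transpose_apply, hD h, hD (Ne.symm h)]
  have hD2 : D = -(L * B) := by
    calc D = Dᵀ := hDT.symm
      _ = (Bᵀ * L)ᵀ := by rw [hBL]
      _ = Lᵀ * B := by rw [transpose_mul, transpose_transpose]
      _ = -(L * B) := by rw [hL, neg_mul]
  have h1 : D * B = -(Bᵀ * D) := by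
    conv_rhs => rw [hD2]
    rw [← hBL]
    simp [Matrix.mul_assoc]
  have hdiag : D = diagonal D.diag := hD.diagonal_diag.symm
  have h2 : ∀ i j, D i i * B i j = -(D j j * B j i) := by
    intro i j
    have := congrFun (congrFun h1 i) j
    rw [hdiag] at this
    simpa [diagonal_mul, mul_diagonal, mul_comm] using this
  refine ⟨h1, h2, fun hne k => ?_⟩
  have := h2 k k
  have h3 : D k k * (B k k + B k k) = 0 := by ring_nf; linarith [this]
  rcases mul_eq_zero.mp h3 with h | h
  · exact absurd h (hne k)
  · linarith
end

section
/- Let B be an n × n integer matrix with b_{kk} = 0 for a fixed index k, let ε ∈ {+1, −1}, and let E = E_ε(k), F = F_ε(k) be defined by E_{ij} = δ_{ij} for j ≠ k, E_{kk} = −1, E_{ik} = [−ε·b_{ik}]₊ (i ≠ k), and F_{ij} = δ_{ij} for i ≠ k, F_{kk} = −1, F_{kj} = [ε·b_{kj}]₊ (j ≠ k). Then for all i, j: (E·B·F)_{ij} = −b_{ij} if i = k or j = k, and (E·B·F)_{ij} = b_{ij} + [b_{ik}]₊·[b_{kj}]₊ − [b_{ik}]₋·[b_{kj}]₋ otherwise.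 In particular E·B·F equals the Fomin–Zelevinsky mutation μ_k(B) and is independent of the choice of ε, i.e. E₊·B·F₊ = E₋·B·F₋. -/
open Matrix

private lemma EBaux {n : ℕ} (B : Matrix (Fin n) (Fin n) ℤ) (k : Fin n) (c : Fin n → ℤ)
    (E : Matrix (Fin n) (Fin n) ℤ)
    (hE : ∀ i j, E i j = if j = k then (if i = k then -1 else c i)
      else (if i = j then 1 else 0)) (i q : Fin n) :
    (E * B) i q = if i = k then -B k q else B i q + c i * B k q := by
  rw [mul_apply]
  by_cases hi : i = k
  · subst hi
    rw [Finset.sum_congr rfl (fun p _ => show E i p * B p q = if p = i then -B i q else 0 by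
      rw [hE]; by_cases hp : p = i
      · subst hp; simp
      · simp [hp, Ne.symm hp])]
    simp
  · rw [Finset.sum_congr rfl (fun p _ => show E i p * B p q =
      (if p = k then c i * B k q else 0) + (if p = i then B i q else 0) by
      rw [hE]
      by_cases hp : p = k
      · subst hp; simp [hi, Ne.symm hi]
      · by_cases hp' : p = i
        · subst hp'; simp [hi, hp]
        · simp [hp, hp', Ne.symm hp']), Finset.sum_add_distrib]
    simp [hi, add_comm]

private lemma MFaux {n : ℕ} (M : Matrix (Fin n) (Fin n) ℤ) (k : Fin n) (d : Fin n → ℤ)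
    (F : Matrix (Fin n) (Fin n) ℤ)
    (hF : ∀ i j, F i j = if i = k then (if j = k then -1 else d j)
      else (if i = j then 1 else 0)) (i j : Fin n) :
    (M * F) i j = if j = k then -M i k else M i j + M i k * d j := by
  rw [mul_apply]
  by_cases hj : j = k
  · subst hj
    rw [Finset.sum_congr rfl (fun q _ => show M i q * F q j = if q = j then -M i j else 0 by
      rw [hF]; by_cases hq : q = j
      · subst hq; simp
      · simp [hq, Ne.symm hq])]
    simp
  · rw [Finset.sum_congr rfl (fun q _ => show M i q * F q j =
      (if q = k then M i k * d j else 0) + (if q = j then M i j else 0) by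
      rw [hF]
      by_cases hq : q = k
      · subst hq; simp [hj, Ne.symm hj]
      · by_cases hq' : q = j
        · subst hq'; simp [hj, hq]
        · simp [hq, hq']), Finset.sum_add_distrib]
    simp [hj, add_comm]

private lemma arith (ε a b : ℤ) (hε : ε = 1 ∨ ε = -1) :
    max (-(ε * a)) 0 * b + a * max (ε * b) 0 =
      max a 0 * max b 0 - max (-a) 0 * max (-b) 0 := by
  rcases hε with rfl | rfl <;>
      simp only [one_mul, neg_one_mul, neg_neg, max_def] <;>
    split_ifs <;> (try ring) <;>
      (have h : a = 0 ∨ b = 0 := by omega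
       rcases h with rfl | rfl <;> ring)

private lemma key {n : ℕ} (B : Matrix (Fin n) (Fin n) ℤ) (k : Fin n)
    (hBkk : B k k = 0) (ε : ℤ) (hε : ε = 1 ∨ ε = -1)
    (E F : Matrix (Fin n) (Fin n) ℤ)
    (hE : ∀ i j, E i j =
      if j = k then (if i = k then -1 else max (-(ε * B i k)) 0)
      else (if i = j then 1 else 0))
    (hF : ∀ i j, F i j =
      if i = k then (if j = k then -1 else max (ε * B k j) 0)
      else (if i = j then 1 else 0)) (i j : Fin n) :
    (E * B * F) i j =
      if i = k ∨ j = k then -(B i j)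
      else B i j + max (B i k) 0 * max (B k j) 0 - max (-(B i k)) 0 * max (-(B k j)) 0 := by
  rw [MFaux (E * B) k _ F hF, EBaux B k _ E hE, EBaux B k _ E hE]
  by_cases hi : i = k <;> by_cases hj : j = k <;>
    simp [hi, hj, hBkk]
  have := arith ε (B i k) (B k j) hε
  linarith

theorem stmt7 {n : ℕ} (B : Matrix (Fin n) (Fin n) ℤ) (k : Fin n)
    (hBkk : B k k = 0) (ε : ℤ) (hε : ε = 1 ∨ ε = -1)
    (E F E' F' : Matrix (Fin n) (Fin n) ℤ)
    (hE : ∀ i j, E i j =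
      if j = k then (if i = k then -1 else max (-(ε * B i k)) 0)
      else (if i = j then 1 else 0))
    (hF : ∀ i j, F i j =
      if i = k then (if j = k then -1 else max (ε * B k j) 0)
      else (if i = j then 1 else 0))
    (hE' : ∀ i j, E' i j =
      if j = k then (if i = k then -1 else max (-(-ε * B i k)) 0)
      else (if i = j then 1 else 0))
    (hF' : ∀ i j, F' i j =
      if i = k then (if j = k then -1 else max (-ε * B k j) 0)
      else (if i = j then 1 else 0)) :
    (∀ i j, (E * B * F) i j =
      if i = k ∨ j = k then -(B i j)
      else B i j + max (B i k) 0 * max (B k j) 0 - max (-(B i k)) 0 * max (-(B k j)) 0) ∧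
    E * B * F = E' * B * F' := by
  have hε' : -ε = 1 ∨ -ε = -1 := by rcases hε with rfl | rfl <;> simp
  refine ⟨key B k hBkk ε hε E F hE hF, ?_⟩
  ext i j
  rw [key B k hBkk ε hε E F hE hF i j, key B k hBkk (-ε) hε' E' F' hE' hF' i j]
end

section
/- Let B, L, D be n × n integer matrices with L skew-symmetric, D diagonal with strictly positive diagonal entries, and BᵀL = D (a compatible pair). Fix an index k and a sign ε ∈ {+1, −1}, and set E = E_ε(k) and F = F_ε(k) as defined from B (E_{ij} = δ_{ij} for j ≠ k, E_{kk} = −1, E_{ik} = [−ε b_{ik}]₊ for i ≠ k; F_{ij} = δ_{ij} for i ≠ k, F_{kk} = −1, F_{kj} = [ε b_{kj}]₊ for j ≠ k). Then the mutated pair B' = E·B·F, L' = Eᵀ·L·E satisfies: L' is skew-symmetric and (B')ᵀ·L' = D. In other words, Berenstein–Zelevinsky mutation of a compatible pair is again a compatible pair, with the same diagonal matrix D. -/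
/-!
Both mutation matrices are rank-one perturbations of the identity along the `k`-th coordinate:
`E = 1 + c e_kᵀ` and `Fᵀ = 1 + r e_kᵀ` with `c_k = r_k = -2`. Hence `E² = 1`, which reduces
`(EBF)ᵀ (EᵀLE)` to `Fᵀ (BᵀL) E = Fᵀ D E`. Compatibility gives `DB = -BᵀD`, i.e.
`d_i b_ik = -d_k b_ki`; since `d > 0` this survives taking positive parts, so `D c = d_k r`, and
this is exactly what makes the rank-one corrections in `Fᵀ D E` cancel.
-/

open Matrix

namespace Matrix

variable {ι R : Type*} [CommRing R]

theorem mul_eq_neg_transpose_mul_of_transpose_mul_eq [Fintype ι] {B L D : Matrix ι ι R}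
    (hL : Lᵀ = -L) (hD : Dᵀ = D) (hBL : Bᵀ * L = D) : D * B = -(Bᵀ * D) := by
  have hLB : L * B = -D := by
    rw [← hD, ← hBL, transpose_mul, transpose_transpose, hL, Matrix.neg_mul, neg_neg]
  rw [← hBL, Matrix.mul_assoc, hLB, Matrix.mul_neg, hBL]

variable [DecidableEq ι]

theorem eq_one_add_vecMulVec_of_apply_eq_one_apply {M : Matrix ι ι R} {k : ι}
    (hM : ∀ i j, j ≠ k → M i j = (1 : Matrix ι ι R) i j) :
    M = 1 + vecMulVec (M.col k - Pi.single k 1) (Pi.single k 1) := by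
  ext i j
  by_cases hj : j = k
  · subst hj; simp [vecMulVec_apply, one_apply, Pi.single_apply]
  · simp [hM i j hj, vecMulVec_apply, hj]

variable [Fintype ι]

theorem one_add_vecMulVec_mul_mul_one_add_vecMulVec {D : Matrix ι ι R}
    {r c u : ι → R} {s : R} (hc : D *ᵥ c = s • r) (hu : u ᵥ* D = s • u) (huc : u ⬝ᵥ c = -2) :
    (1 + vecMulVec r u) * D * (1 + vecMulVec c u) = D := by
  have expand : (1 + vecMulVec r u) * D * (1 + vecMulVec c u)
      = D + D * vecMulVec c u + vecMulVec r u * D * (1 + vecMulVec c u) := by noncomm_ring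
  rw [expand, mul_vecMulVec D, vecMulVec_mul r u D, Matrix.mul_add, Matrix.mul_one,
    vecMulVec_mul_vecMulVec, hc, hu, smul_dotProduct, huc]
  ext i j
  simp only [add_apply, vecMulVec_apply, Pi.smul_apply, smul_eq_mul]
  ring

variable {M N : Matrix ι ι R} {k : ι}

theorem mul_self_eq_one_of_apply_eq_one_apply
    (hM : ∀ i j, j ≠ k → M i j = (1 : Matrix ι ι R) i j) (hMk : M k k = -1) : M * M = 1 := by
  rw [eq_one_add_vecMulVec_of_apply_eq_one_apply hM]
  nth_rw 1 [← Matrix.mul_one (1 + _)]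
  exact one_add_vecMulVec_mul_mul_one_add_vecMulVec (D := 1) (s := 1)
    (r := M.col k - Pi.single k 1) (c := M.col k - Pi.single k 1) (u := Pi.single k 1)
    (by simp) (by simp) (by simp [hMk]; norm_num)

theorem transpose_mul_diagonal_mul_eq_diagonal {δ : ι → R}
    (hM : ∀ i j, j ≠ k → M i j = (1 : Matrix ι ι R) i j)
    (hN : ∀ i j, i ≠ k → N i j = (1 : Matrix ι ι R) i j) (hMk : M k k = -1) (hNk : N k k = -1)
    (hMN : ∀ i, i ≠ k → δ i * M i k = δ k * N k i) :
    Nᵀ * diagonal δ * M = diagonal δ := by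
  have hNT : ∀ i j, j ≠ k → Nᵀ i j = (1 : Matrix ι ι R) i j := fun i j hj => by
    rw [transpose_apply, hN j i hj, one_apply, one_apply]
    simp only [eq_comm]
  rw [eq_one_add_vecMulVec_of_apply_eq_one_apply hM,
    eq_one_add_vecMulVec_of_apply_eq_one_apply hNT]
  refine one_add_vecMulVec_mul_mul_one_add_vecMulVec (s := δ k) ?_ ?_ (by simp [hMk]; norm_num)
  · ext i
    by_cases hi : i = k
    · subst hi; simp [mulVec_diagonal, hMk, hNk]
    · simp [mulVec_diagonal, hi, hMN i hi]
  · rw [single_vecMul_diagonal, one_mul, ← Pi.single_smul', smul_eq_mul, mul_one]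

end Matrix

theorem mul_max_zero_eq_mul_max_zero {R : Type*} [Semiring R] [LinearOrder R] [PosMulMono R]
    {a b x y : R} (ha : 0 ≤ a) (hb : 0 ≤ b) (h : a * x = b * y) :
    a * max x 0 = b * max y 0 := by
  rw [mul_max_of_nonneg _ _ ha, mul_max_of_nonneg _ _ hb, mul_zero, mul_zero, h]

theorem stmt8_general {n : ℕ} (B L D : Matrix (Fin n) (Fin n) ℤ)
    (hL : Lᵀ = -L) (hD : D.IsDiag) (hDpos : ∀ i, 0 < D i i) (hBL : Bᵀ * L = D)
    (k : Fin n) (ε : ℤ)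
    (E F : Matrix (Fin n) (Fin n) ℤ)
    (hE : ∀ i j, E i j =
      if j = k then (if i = k then -1 else max (-(ε * B i k)) 0)
      else (if i = j then 1 else 0))
    (hF : ∀ i j, F i j =
      if i = k then (if j = k then -1 else max (ε * B k j) 0)
      else (if i = j then 1 else 0)) :
    (Eᵀ * L * E)ᵀ = -(Eᵀ * L * E) ∧ (E * B * F)ᵀ * (Eᵀ * L * E) = D := by
  have hdiag : diagonal D.diag = D := hD.diagonal_diag
  have hskew : ∀ i, D i i * B i k = -(B k i * D k k) := fun i => by
    have h := congrFun₂ (mul_eq_neg_transpose_mul_of_transpose_mul_eq hL hD.isSymm hBL) i k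
    rw [← hdiag, diagonal_mul, neg_apply, mul_diagonal] at h
    exact h
  have hEcol : ∀ i j, j ≠ k → E i j = (1 : Matrix (Fin n) (Fin n) ℤ) i j := fun i j hj => by
    simp [hE, hj, one_apply]
  have hFrow : ∀ i j, i ≠ k → F i j = (1 : Matrix (Fin n) (Fin n) ℤ) i j := fun i j hi => by
    simp [hF, hi, one_apply]
  have hEk : E k k = -1 := by simp [hE]
  have hFk : F k k = -1 := by simp [hF]
  have hEF : ∀ i, i ≠ k → D i i * E i k = D k k * F k i := fun i hi => by
    simp only [hE, hF, hi, if_true, if_false]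
    exact mul_max_zero_eq_mul_max_zero (hDpos i).le (hDpos k).le
      (by linear_combination (-ε) * hskew i)
  have hFDE : Fᵀ * D * E = D := by
    rw [← hdiag]
    exact transpose_mul_diagonal_mul_eq_diagonal hEcol hFrow hEk hFk hEF
  have hEE : Eᵀ * Eᵀ = 1 := by
    rw [← transpose_mul, mul_self_eq_one_of_apply_eq_one_apply hEcol hEk, transpose_one]
  refine ⟨by simp [transpose_mul, hL, Matrix.mul_assoc], ?_⟩
  calc (E * B * F)ᵀ * (Eᵀ * L * E)
      = Fᵀ * (Bᵀ * (Eᵀ * Eᵀ) * L) * E := by simp only [transpose_mul, Matrix.mul_assoc]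
    _ = D := by rw [hEE, Matrix.mul_one, hBL, hFDE]

theorem stmt8 {n : ℕ} (B L D : Matrix (Fin n) (Fin n) ℤ)
    (hL : Lᵀ = -L) (hD : D.IsDiag) (hDpos : ∀ i, 0 < D i i) (hBL : Bᵀ * L = D)
    (k : Fin n) (ε : ℤ) (hε : ε = 1 ∨ ε = -1)
    (E F : Matrix (Fin n) (Fin n) ℤ)
    (hE : ∀ i j, E i j =
      if j = k then (if i = k then -1 else max (-(ε * B i k)) 0)
      else (if i = j then 1 else 0))
    (hF : ∀ i j, F i j =
      if i = k then (if j = k then -1 else max (ε * B k j) 0)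
      else (if i = j then 1 else 0)) :
    (Eᵀ * L * E)ᵀ = -(Eᵀ * L * E) ∧ (E * B * F)ᵀ * (Eᵀ * L * E) = D :=
  stmt8_general B L D hL hD hDpos hBL k ε E F hE hF
end
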